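/- Fix n ≥ 1, a smooth loss E : ℝ^D → ℝ, and θ₀ ∈ ℝ^D. Let θ_n(h) be the result of n full-batch gradient descent steps θ_{μ+1}(h) = θ_μ(h) − h∇E(θ_μ(h)), θ_0(h) = θ₀. Then there exist C > 0 and h₀ > 0 such that for every h ∈ (0, h₀) and every solution φ : [0, n h] → ℝ^D of the IGR flow φ′(t) = −∇E(φ(t)) − (h/2) ∇²E(φ(t))[∇E(φ(t))] with φ(0) = θ₀, one has ‖φ(n h) − θ_n(h)‖ ≤ C h³; in particular, the first-order correction to the gradient flow describing n full-batch gradient descent steps does not depend on n. -/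

import Mathlib

open Set

section Aux
variable {V W : Type*} [NormedAddCommGroup V] [NormedSpace ℝ V]
  [NormedAddCommGroup W] [NormedSpace ℝ W]

lemma aux_lip (u : V → W) (hu : ContDiff ℝ (⊤ : ℕ∞) u) {s : Set V} (hs : Convex ℝ s)
    (hc : IsCompact s) : ∃ L, 0 ≤ L ∧ (∀ x ∈ s, ‖u x‖ ≤ L) ∧
      ∀ x ∈ s, ∀ y ∈ s, ‖u x - u y‖ ≤ L * ‖x - y‖ := by
  obtain ⟨C₁, hC₁⟩ := hc.exists_bound_of_continuousOn hu.continuous.continuousOn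
  obtain ⟨C₂, hC₂⟩ := hc.exists_bound_of_continuousOn
    (hu.fderiv_right (m := (⊤ : ℕ∞)) (by simp)).continuous.continuousOn
  refine ⟨max (max C₁ C₂) 0, le_max_right _ _, fun x hx => le_trans (hC₁ x hx)
    (le_max_of_le_left (le_max_left _ _)), fun x hx y hy => ?_⟩
  exact Convex.norm_image_sub_le_of_norm_hasFDerivWithin_le
    (fun z hz => ((hu.differentiable (by simp)) z).hasFDerivAt.hasFDerivWithinAt)
    (fun z hz => le_trans (hC₂ z hz) (le_max_of_le_left (le_max_right _ _))) hs hy hx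

lemma aux_mvt {f f' : ℝ → W} {a b Cb : ℝ}
    (hf : ∀ t ∈ Icc a b, HasDerivWithinAt f (f' t) (Icc a b) t)
    (hb : ∀ t ∈ Icc a b, ‖f' t‖ ≤ Cb) :
    ∀ t ∈ Icc a b, ‖f t - f a‖ ≤ Cb * (t - a) := by
  intro t ht
  have := Convex.norm_image_sub_le_of_norm_hasDerivWithin_le hf hb (convex_Icc a b)
    (left_mem_Icc.2 (le_trans ht.1 ht.2)) ht
  simpa [Real.norm_eq_abs, abs_of_nonneg (sub_nonneg.mpr ht.1)] using this

end Aux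

/-- Full-batch gradient descent iterates: `θ₀` and `θ_{μ+1} = θ_μ - h ∇E(θ_μ)`. -/
noncomputable def gdIter {D : ℕ} (E : EuclideanSpace ℝ (Fin D) → ℝ)
    (h : ℝ) (θ₀ : EuclideanSpace ℝ (Fin D)) : ℕ → EuclideanSpace ℝ (Fin D)
  | 0 => θ₀
  | (μ + 1) => gdIter E h θ₀ μ - h • gradient E (gdIter E h θ₀ μ)

set_option maxHeartbeats 1000000 in
/-- `n` full-batch gradient descent steps follow the IGR flow
`φ' = −∇E(φ) − (h/2) ∇²E(φ)[∇E(φ)]` with error of order `O(h³)`; in particular,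
the first-order correction does not depend on `n`. -/
theorem n_gd_steps_follow_igr_flow {D n : ℕ} (hn : 1 ≤ n)
    (E : EuclideanSpace ℝ (Fin D) → ℝ) (hE : ContDiff ℝ (⊤ : ℕ∞) E)
    (θ₀ : EuclideanSpace ℝ (Fin D)) :
    ∃ C > (0 : ℝ), ∃ h₀ > (0 : ℝ), ∀ h ∈ Set.Ioo (0 : ℝ) h₀,
      ∀ φ : ℝ → EuclideanSpace ℝ (Fin D),
        φ 0 = θ₀ →
        (∀ t ∈ Set.Icc (0 : ℝ) ((n : ℝ) * h),
          HasDerivAt φ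
            (-(gradient E (φ t))
              - (h / 2) • fderiv ℝ (gradient E) (φ t) (gradient E (φ t))) t) →
        ‖φ ((n : ℝ) * h) - gdIter E h θ₀ n‖ ≤ C * h ^ 3 := by
  classical
  set g : EuclideanSpace ℝ (Fin D) → EuclideanSpace ℝ (Fin D) := gradient E with hgdef
  have hg : ContDiff ℝ (⊤ : ℕ∞) g := by
    rw [hgdef, show gradient E = fun x => (InnerProductSpace.toDual ℝ _).symm (fderiv ℝ E x)
      from rfl]
    exact (InnerProductSpace.toDual ℝ _).symm.contDiff.comp (hE.fderiv_right (by simp))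
  set G : EuclideanSpace ℝ (Fin D) → EuclideanSpace ℝ (Fin D) :=
    fun x => fderiv ℝ g x (g x) with hGdef
  have hGc : ContDiff ℝ (⊤ : ℕ∞) G := (hg.fderiv_right (m := (⊤ : ℕ∞)) (by simp)).clm_apply hg
  set B : EuclideanSpace ℝ (Fin D) → EuclideanSpace ℝ (Fin D) :=
    fun x => fderiv ℝ g x (G x) + fderiv ℝ G x (g x) with hBdef
  have hBc : ContDiff ℝ (⊤ : ℕ∞) B := ((hg.fderiv_right (m := (⊤ : ℕ∞)) (by simp)).clm_apply hGc).add
    ((hGc.fderiv_right (m := (⊤ : ℕ∞)) (by simp)).clm_apply hg)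
  set Cc : EuclideanSpace ℝ (Fin D) → EuclideanSpace ℝ (Fin D) :=
    fun x => fderiv ℝ G x (G x) with hCdef
  have hCc : ContDiff ℝ (⊤ : ℕ∞) Cc := (hGc.fderiv_right (m := (⊤ : ℕ∞)) (by simp)).clm_apply hGc
  have hGapp : ∀ x, fderiv ℝ g x (g x) = G x := fun _ => rfl
  have hBapp : ∀ x, B x = fderiv ℝ g x (G x) + fderiv ℝ G x (g x) := fun _ => rfl
  have hCapp : ∀ x, fderiv ℝ G x (G x) = Cc x := fun _ => rfl
  clear_value g G B Cc
  set K : Set (EuclideanSpace ℝ (Fin D)) := Metric.closedBall θ₀ 1 with hKdef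
  have hKconv : Convex ℝ K := convex_closedBall _ _
  have hKcomp : IsCompact K := isCompact_closedBall _ _
  clear_value K
  obtain ⟨Lg, hLg0, hgb, hglip⟩ := aux_lip g hg hKconv hKcomp
  obtain ⟨LG, hLG0, hGb, hGlip⟩ := aux_lip G hGc hKconv hKcomp
  obtain ⟨LB, hLB0, hBb, hBlip⟩ := aux_lip B hBc hKconv hKcomp
  obtain ⟨LC, hLC0, hCb, hClip⟩ := aux_lip Cc hCc hKconv hKcomp
  set M : ℝ := Lg + LG + 1 with hMdef
  have hM1 : 1 ≤ M := by rw [hMdef]; linarith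
  have hM0 : 0 < M := lt_of_lt_of_le one_pos hM1
  set L₂ : ℝ := LG + LB + LC with hL₂def
  have hL₂0 : 0 ≤ L₂ := by rw [hL₂def]; positivity
  set K₀ : ℝ := L₂ * M + LB / 4 + LC / 8 with hK₀def
  have hK₀0 : 0 ≤ K₀ := by rw [hK₀def]; positivity
  set Lip : ℝ := 1 + Lg with hLipdef
  have hLip1 : 1 ≤ Lip := by rw [hLipdef]; linarith
  clear_value M L₂ K₀ Lip
  have hn0 : (0 : ℝ) < n := by exact_mod_cast Nat.pos_of_ne_zero (by omega)
  refine ⟨K₀ * n * Lip ^ n + 1, by positivity, min 1 (1 / (2 * (n : ℝ) * M)),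
    lt_min one_pos (by positivity), ?_⟩
  rintro h ⟨hh0, hhlt⟩ φ hφ0 hφ
  have hh1 : h ≤ 1 := le_of_lt (lt_of_lt_of_le hhlt (min_le_left _ _))
  have hMT : M * ((n : ℝ) * h) < 1 / 2 := by
    have h1 : h < 1 / (2 * (n : ℝ) * M) := lt_of_lt_of_le hhlt (min_le_right _ _)
    have h2 : h * (2 * (n : ℝ) * M) < 1 := by
      rw [← lt_div_iff₀ (by positivity)]; exact h1
    linarith only [h2]
  set T : ℝ := (n : ℝ) * h with hTdef
  have hT0 : 0 < T := by rw [hTdef]; positivity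
  clear_value T
  -- the velocity field
  set v : ℝ → EuclideanSpace ℝ (Fin D) :=
    fun t => -(g (φ t)) - (h / 2) • G (φ t) with hvdef
  have hvapp : ∀ t, v t = -(g (φ t)) - (h / 2) • G (φ t) := fun _ => rfl
  have hφ' : ∀ t ∈ Icc (0 : ℝ) T, HasDerivAt φ (v t) t := by
    intro t ht
    rw [hvapp t, ← hGapp (φ t)]
    exact hφ t ht
  clear_value v
  have hvb : ∀ t : ℝ, φ t ∈ K → ‖v t‖ ≤ M := by
    intro t ht
    have h1 : ‖v t‖ ≤ ‖g (φ t)‖ + (h / 2) * ‖G (φ t)‖ := by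
      rw [hvapp t]
      refine (norm_sub_le _ _).trans ?_
      rw [norm_neg, norm_smul, Real.norm_eq_abs, abs_of_pos (by positivity)]
    have h2 := hgb _ ht
    have h3 := hGb _ ht
    have h4 : 0 ≤ ‖G (φ t)‖ := norm_nonneg _
    rw [hMdef]
    nlinarith only [h1, h2, h3, h4, hh1, hh0]
  have hφc : ∀ t ∈ Icc (0 : ℝ) T, ContinuousAt φ t := fun t ht => (hφ' t ht).continuousAt
  -- a priori containment
  have key : ∀ t ∈ Icc (0 : ℝ) T, dist (φ t) θ₀ ≤ 1 / 2 := by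
    by_contra hbad
    push_neg at hbad
    obtain ⟨t₁, ht₁, ht₁'⟩ := hbad
    set Bad : Set ℝ := {t ∈ Icc (0 : ℝ) T | 1 / 2 < dist (φ t) θ₀} with hBaddef
    have hBne : Bad.Nonempty := ⟨t₁, ht₁, ht₁'⟩
    have hBbd : BddBelow Bad := ⟨0, fun t ht => ht.1.1⟩
    set c : ℝ := sInf Bad with hcdef
    have hccl : c ∈ closure Bad := csInf_mem_closure hBne hBbd
    have hcIcc : c ∈ Icc (0 : ℝ) T :=
      isClosed_Icc.closure_subset ((closure_mono (fun t ht => ht.1)) hccl)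
    have hcont : ContinuousAt (fun s => dist (φ s) θ₀) c :=
      (hφc c hcIcc).dist continuousAt_const
    have hge : 1 / 2 ≤ dist (φ c) θ₀ := by
      haveI : (nhdsWithin c Bad).NeBot := mem_closure_iff_nhdsWithin_neBot.mp hccl
      refine ge_of_tendsto (x := nhdsWithin c Bad)
        (hcont.tendsto.mono_left nhdsWithin_le_nhds) ?_
      exact eventually_mem_nhdsWithin.mono fun t ht => le_of_lt ht.2
    have hgood : ∀ s, s ∈ Icc (0 : ℝ) T → s < c → dist (φ s) θ₀ ≤ 1 / 2 := by
      intro s hs hlt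
      by_contra hcs
      exact absurd (csInf_le hBbd ⟨hs, lt_of_not_ge hcs⟩) (not_le.mpr hlt)
    have hc0 : 0 < c := by
      rcases hcIcc.1.eq_or_lt with he | hlt
      · exfalso; rw [← he, hφ0, dist_self] at hge; linarith only [hge]
      · exact hlt
    have hsmall : ∀ s ∈ Ico (0 : ℝ) c, dist (φ s) θ₀ ≤ M * T := by
      rintro s ⟨hs0, hsc⟩
      have hsT : s ∈ Icc (0 : ℝ) T := ⟨hs0, le_trans (le_of_lt hsc) hcIcc.2⟩
      have hmvt := aux_mvt (f := φ) (f' := v) (a := 0) (b := s)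
        (fun u hu => (hφ' u ⟨hu.1, le_trans hu.2 hsT.2⟩).hasDerivWithinAt)
        (fun u hu => hvb u (by
          have : dist (φ u) θ₀ ≤ 1 / 2 :=
            hgood u ⟨hu.1, le_trans hu.2 hsT.2⟩ (lt_of_le_of_lt hu.2 hsc)
          rw [hKdef]; exact Metric.mem_closedBall.mpr (le_trans this (by norm_num))))
        s (right_mem_Icc.mpr hs0)
      rw [hφ0] at hmvt
      rw [dist_eq_norm]
      calc ‖φ s - θ₀‖ ≤ M * (s - 0) := hmvt
        _ ≤ M * T := by
            rw [sub_zero]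
            exact mul_le_mul_of_nonneg_left hsT.2 hM0.le
    have hle : dist (φ c) θ₀ ≤ M * T := by
      haveI : (nhdsWithin c (Ico (0:ℝ) c)).NeBot := by
        refine mem_closure_iff_nhdsWithin_neBot.mp ?_
        rw [closure_Ico hc0.ne]
        exact right_mem_Icc.mpr hc0.le
      refine le_of_tendsto (x := nhdsWithin c (Ico (0:ℝ) c))
        (hcont.tendsto.mono_left nhdsWithin_le_nhds) ?_
      exact eventually_mem_nhdsWithin.mono fun t ht => hsmall t ht
    linarith only [hge, hle, hMT]
  have memK : ∀ t ∈ Icc (0 : ℝ) T, φ t ∈ K := by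
    intro t ht
    rw [hKdef]
    exact Metric.mem_closedBall.mpr (le_trans (key t ht) (by norm_num))
  -- gradient descent iterates stay in K
  have hgd : ∀ μ : ℕ, μ ≤ n →
      ‖gdIter E h θ₀ μ - θ₀‖ ≤ M * ((μ : ℝ) * h) ∧ gdIter E h θ₀ μ ∈ K := by
    intro μ
    induction μ with
    | zero =>
      intro _
      constructor
      · norm_num [gdIter]
      · rw [hKdef]; exact Metric.mem_closedBall.mpr (by simp [gdIter])
    | succ μ ih =>
      intro hμn
      obtain ⟨ih1, ih2⟩ := ih (le_of_lt (Nat.lt_of_succ_le hμn))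
      have hcast : ((μ : ℝ) + 1) ≤ (n : ℝ) := by exact_mod_cast hμn
      have hbound : ‖gdIter E h θ₀ (μ + 1) - θ₀‖ ≤ M * (((μ : ℝ) + 1) * h) := by
        have heq : gdIter E h θ₀ (μ + 1) - θ₀ =
            (gdIter E h θ₀ μ - θ₀) - h • g (gdIter E h θ₀ μ) := by
          rw [hgdef]; simp [gdIter]; abel
        rw [heq]
        refine (norm_sub_le _ _).trans ?_
        rw [norm_smul, Real.norm_eq_abs, abs_of_pos hh0]
        have := hgb _ ih2
        have hLgM : Lg ≤ M := by rw [hMdef]; linarith only [hLG0]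
        have h2 : h * ‖g (gdIter E h θ₀ μ)‖ ≤ h * M :=
          mul_le_mul_of_nonneg_left (le_trans this hLgM) hh0.le
        push_cast at ih1 ⊢
        linarith only [ih1, h2]
      refine ⟨by push_cast; exact hbound, ?_⟩
      rw [hKdef]
      refine Metric.mem_closedBall.mpr ?_
      rw [dist_eq_norm]
      have h1 : M * (((μ : ℝ) + 1) * h) ≤ M * T := by
        rw [hTdef]
        exact mul_le_mul_of_nonneg_left
          (mul_le_mul_of_nonneg_right hcast hh0.le) hM0.le
      linarith only [hbound, hMT, h1]
  -- the one-step estimate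
  have step : ∀ μ : ℕ, μ < n →
      ‖φ ((μ : ℝ) * h + h) - (φ ((μ : ℝ) * h) - h • g (φ ((μ : ℝ) * h)))‖ ≤ K₀ * h ^ 3 := by
    intro μ hμ
    set a : ℝ := (μ : ℝ) * h with hadef
    set b : ℝ := a + h with hbdef
    have hba : b - a = h := by rw [hbdef]; ring
    have hab : a ≤ b := by rw [hbdef]; linarith
    have ha0 : (0 : ℝ) ≤ a := by rw [hadef]; positivity
    have hμ1 : ((μ : ℝ) + 1) ≤ (n : ℝ) := by exact_mod_cast Nat.succ_le_of_lt hμ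
    have hbT : b ≤ T := by
      rw [hbdef, hadef, hTdef]
      have := mul_le_mul_of_nonneg_right hμ1 hh0.le
      linarith only [this]
    clear_value a b
    have hsub : Icc a b ⊆ Icc (0 : ℝ) T := fun t ht => ⟨le_trans ha0 ht.1, le_trans ht.2 hbT⟩
    have hmem : ∀ t ∈ Icc a b, φ t ∈ K := fun t ht => memK t (hsub ht)
    have haK : φ a ∈ K := hmem a (left_mem_Icc.mpr hab)
    have hv : ∀ t ∈ Icc a b, HasDerivAt φ (v t) t := fun t ht => hφ' t (hsub ht)
    set W : ℝ → EuclideanSpace ℝ (Fin D) :=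
      fun t => G (φ t) + (h / 2) • B (φ t) + (h ^ 2 / 4) • Cc (φ t) with hWdef
    have hWapp : ∀ t, W t = G (φ t) + (h / 2) • B (φ t) + (h ^ 2 / 4) • Cc (φ t) :=
      fun _ => rfl
    clear_value W
    have hvW : ∀ t ∈ Icc a b, HasDerivAt v (W t) t := by
      intro t ht
      have hdg : HasDerivAt (fun u => g (φ u)) (fderiv ℝ g (φ t) (v t)) t :=
        ((hg.differentiable (by simp) (φ t)).hasFDerivAt).comp_hasDerivAt t (hv t ht)
      have hdG : HasDerivAt (fun u => G (φ u)) (fderiv ℝ G (φ t) (v t)) t :=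
        ((hGc.differentiable (by simp) (φ t)).hasFDerivAt).comp_hasDerivAt t (hv t ht)
      have hcomb := (hdg.neg).sub (hdG.const_smul (h / 2))
      have heq : W t = -(fderiv ℝ g (φ t) (v t)) - (h / 2) • (fderiv ℝ G (φ t) (v t)) := by
        rw [hWapp, hvapp t, map_sub, map_neg, map_smul, map_sub, map_neg, map_smul,
          hGapp, hCapp, hBapp]
        module
      have hveq : v = fun u => -(g (φ u)) - (h / 2) • G (φ u) := funext hvapp
      rw [show ((-fun u => g (φ u)) - (h / 2) • fun u => G (φ u)) = v from hveq.symm] at hcomb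
      rw [heq]
      exact hcomb
    have hphiL : ∀ t ∈ Icc a b, ‖φ t - φ a‖ ≤ M * h := by
      intro t ht
      have h5 := aux_mvt (f := φ) (f' := v)
        (fun u hu => (hv u hu).hasDerivWithinAt)
        (fun u hu => hvb u (hmem u hu)) t ht
      have htb : t - a ≤ h := by linarith only [ht.2, hba]
      exact le_trans h5 (mul_le_mul_of_nonneg_left htb hM0.le)
    have hWb : ∀ t ∈ Icc a b, ‖W t - W a‖ ≤ L₂ * (M * h) := by
      intro t ht
      have heq : W t - W a = (G (φ t) - G (φ a)) + ((h / 2) • (B (φ t) - B (φ a))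
          + (h ^ 2 / 4) • (Cc (φ t) - Cc (φ a))) := by
        rw [hWapp, hWapp]; module
      rw [heq]
      have n1 : ‖G (φ t) - G (φ a)‖ ≤ LG * (M * h) := by
        have := hGlip _ (hmem t ht) _ haK
        exact le_trans this (mul_le_mul_of_nonneg_left (hphiL t ht) hLG0)
      have n2 : ‖(h / 2) • (B (φ t) - B (φ a))‖ ≤ LB * (M * h) := by
        rw [norm_smul, Real.norm_eq_abs, abs_of_pos (by positivity)]
        have l1 := hBlip _ (hmem t ht) _ haK
        have l2 : ‖B (φ t) - B (φ a)‖ ≤ LB * (M * h) :=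
          le_trans l1 (mul_le_mul_of_nonneg_left (hphiL t ht) hLB0)
        calc h / 2 * ‖B (φ t) - B (φ a)‖ ≤ 1 * (LB * (M * h)) :=
              mul_le_mul (by linarith only [hh1]) l2 (norm_nonneg _) zero_le_one
          _ = LB * (M * h) := one_mul _
      have n3 : ‖(h ^ 2 / 4) • (Cc (φ t) - Cc (φ a))‖ ≤ LC * (M * h) := by
        rw [norm_smul, Real.norm_eq_abs, abs_of_pos (by positivity)]
        have l1 := hClip _ (hmem t ht) _ haK
        have l2 : ‖Cc (φ t) - Cc (φ a)‖ ≤ LC * (M * h) :=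
          le_trans l1 (mul_le_mul_of_nonneg_left (hphiL t ht) hLC0)
        have hsq : h ^ 2 / 4 ≤ 1 := by nlinarith only [hh1, hh0]
        calc h ^ 2 / 4 * ‖Cc (φ t) - Cc (φ a)‖ ≤ 1 * (LC * (M * h)) :=
              mul_le_mul hsq l2 (norm_nonneg _) zero_le_one
          _ = LC * (M * h) := one_mul _
      calc ‖(G (φ t) - G (φ a)) + ((h / 2) • (B (φ t) - B (φ a))
          + (h ^ 2 / 4) • (Cc (φ t) - Cc (φ a)))‖
          ≤ ‖G (φ t) - G (φ a)‖ + (‖(h / 2) • (B (φ t) - B (φ a))‖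
            + ‖(h ^ 2 / 4) • (Cc (φ t) - Cc (φ a))‖) :=
            (norm_add_le _ _).trans (by gcongr; exact norm_add_le _ _)
        _ ≤ L₂ * (M * h) := by rw [hL₂def]; linarith only [n1, n2, n3]
    -- first integration
    have hχ : ∀ t ∈ Icc a b, ‖v t - v a - (t - a) • W a‖ ≤ L₂ * M * h ^ 2 := by
      intro t ht
      have hd : ∀ u ∈ Icc a b, HasDerivWithinAt (fun s => v s - (s - a) • W a)
          (W u - W a) (Icc a b) u := by
        intro u hu
        have hlin : HasDerivAt (fun s : ℝ => (s - a) • W a) (W a) u := by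
          have := ((hasDerivAt_id u).sub_const a).smul_const (W a)
          simpa using this
        exact ((hvW u hu).sub hlin).hasDerivWithinAt
      have h5 := aux_mvt hd hWb t ht
      simp only [sub_self, zero_smul, sub_zero] at h5
      have heq : v t - v a - (t - a) • W a = v t - (t - a) • W a - v a := by abel
      rw [heq]
      have htb : t - a ≤ h := by linarith only [ht.2, hba]
      calc ‖v t - (t - a) • W a - v a‖ ≤ L₂ * (M * h) * (t - a) := h5
        _ ≤ L₂ * (M * h) * h := mul_le_mul_of_nonneg_left htb
            (mul_nonneg hL₂0 (mul_nonneg hM0.le hh0.le))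
        _ = L₂ * M * h ^ 2 := by ring
    -- second integration
    have hψ : ‖φ b - φ a - h • v a - (h ^ 2 / 2) • W a‖ ≤ L₂ * M * h ^ 2 * h := by
      have hd : ∀ u ∈ Icc a b, HasDerivWithinAt
          (fun s => φ s - (s - a) • v a - ((s - a) ^ 2 / 2) • W a)
          (v u - v a - (u - a) • W a) (Icc a b) u := by
        intro u hu
        have hlin : HasDerivAt (fun s : ℝ => (s - a) • v a) (v a) u := by
          have := ((hasDerivAt_id u).sub_const a).smul_const (v a)
          simpa using this
        have hquad : HasDerivAt (fun s : ℝ => ((s - a) ^ 2 / 2) • W a) ((u - a) • W a) u := by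
          have h2 := ((((hasDerivAt_id u).sub_const a).pow 2).div_const 2).smul_const (W a)
          exact h2.congr_deriv (by congr 1; simp)
        exact (((hv u hu).sub hlin).sub hquad).hasDerivWithinAt
      have h6 := aux_mvt hd hχ b (right_mem_Icc.mpr hab)
      simp only [sub_self, zero_smul, sub_zero, ne_eq, OfNat.ofNat_ne_zero,
        not_false_eq_true, zero_pow, zero_div] at h6
      rw [hba] at h6
      have heq : φ b - h • v a - (h ^ 2 / 2) • W a - φ a
          = φ b - φ a - h • v a - (h ^ 2 / 2) • W a := by abel
      rw [heq] at h6
      exact h6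
    -- assemble
    have keyeq : φ b - (φ a - h • g (φ a)) =
        (φ b - φ a - h • v a - (h ^ 2 / 2) • W a)
        + ((h ^ 3 / 4) • B (φ a) + (h ^ 4 / 8) • Cc (φ a)) := by
      rw [hvapp, hWapp]
      module
    rw [keyeq]
    have nB := hBb _ haK
    have nC := hCb _ haK
    calc ‖(φ b - φ a - h • v a - (h ^ 2 / 2) • W a)
        + ((h ^ 3 / 4) • B (φ a) + (h ^ 4 / 8) • Cc (φ a))‖
        ≤ ‖φ b - φ a - h • v a - (h ^ 2 / 2) • W a‖
          + (‖(h ^ 3 / 4) • B (φ a)‖ + ‖(h ^ 4 / 8) • Cc (φ a)‖) :=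
          (norm_add_le _ _).trans (by gcongr; exact norm_add_le _ _)
      _ ≤ L₂ * M * h ^ 2 * h + ((h ^ 3 / 4) * LB + (h ^ 4 / 8) * LC) := by
          refine add_le_add hψ ?_
          rw [norm_smul, norm_smul, Real.norm_eq_abs, Real.norm_eq_abs,
            abs_of_pos (by positivity), abs_of_pos (by positivity)]
          gcongr
      _ ≤ K₀ * h ^ 3 := by
          rw [hK₀def]
          have h4 : h ^ 4 ≤ h ^ 3 := by nlinarith only [pow_pos hh0 3, hh1]
          nlinarith only [h4, hLC0, hLB0, hL₂0, hM0, pow_pos hh0 3]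
  -- the discrete Grönwall induction
  have main : ∀ μ : ℕ, μ ≤ n →
      ‖φ ((μ : ℝ) * h) - gdIter E h θ₀ μ‖ ≤ K₀ * h ^ 3 * ((μ : ℝ) * Lip ^ μ) := by
    intro μ
    induction μ with
    | zero => intro _; simp [gdIter, hφ0]
    | succ μ ih =>
      intro hμn
      have hμ : μ < n := Nat.lt_of_succ_le hμn
      have e_ih := ih (le_of_lt hμ)
      have haIcc : (μ : ℝ) * h ∈ Icc (0 : ℝ) T := by
        constructor
        · positivity
        · rw [hTdef]
          have hc : (μ : ℝ) ≤ (n : ℝ) := by exact_mod_cast le_of_lt hμ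
          exact mul_le_mul_of_nonneg_right hc hh0.le
      have hpK : φ ((μ : ℝ) * h) ∈ K := memK _ haIcc
      have hqK : gdIter E h θ₀ μ ∈ K := (hgd μ (le_of_lt hμ)).2
      have hstep := step μ hμ
      have hcast : ((μ + 1 : ℕ) : ℝ) * h = (μ : ℝ) * h + h := by push_cast; ring
      rw [hcast]
      have hgditer : gdIter E h θ₀ (μ + 1) = gdIter E h θ₀ μ - h • g (gdIter E h θ₀ μ) := by
        rw [hgdef]; simp [gdIter]
      set p := φ ((μ : ℝ) * h) with hpdef
      set q := gdIter E h θ₀ μ with hqdef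
      have tri : ‖φ ((μ : ℝ) * h + h) - gdIter E h θ₀ (μ + 1)‖
          ≤ ‖φ ((μ : ℝ) * h + h) - (p - h • g p)‖ + ‖(p - h • g p) - (q - h • g q)‖ := by
        rw [hgditer]
        have := dist_triangle (φ ((μ : ℝ) * h + h)) (p - h • g p) (q - h • g q)
        simpa [dist_eq_norm] using this
      have lip2 : ‖(p - h • g p) - (q - h • g q)‖ ≤ Lip * ‖p - q‖ := by
        have heq : (p - h • g p) - (q - h • g q) = (p - q) - h • (g p - g q) := by module
        rw [heq]
        refine (norm_sub_le _ _).trans ?_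
        rw [norm_smul, Real.norm_eq_abs, abs_of_pos hh0]
        have l1 := hglip p hpK q hqK
        have l2 : h * ‖g p - g q‖ ≤ 1 * (Lg * ‖p - q‖) :=
          mul_le_mul hh1 l1 (norm_nonneg _) zero_le_one
        rw [hLipdef]
        linarith only [l2]
      have hLpow : (1 : ℝ) ≤ Lip ^ μ := one_le_pow₀ hLip1
      calc ‖φ ((μ : ℝ) * h + h) - gdIter E h θ₀ (μ + 1)‖
          ≤ K₀ * h ^ 3 + Lip * ‖p - q‖ := by linarith only [tri, hstep, lip2]
        _ ≤ K₀ * h ^ 3 + Lip * (K₀ * h ^ 3 * ((μ : ℝ) * Lip ^ μ)) := by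
            have hL0 : (0 : ℝ) < Lip := lt_of_lt_of_le one_pos hLip1
            exact add_le_add_right (mul_le_mul_of_nonneg_left e_ih hL0.le) _
        _ ≤ K₀ * h ^ 3 * (((μ + 1 : ℕ) : ℝ) * Lip ^ (μ + 1)) := by
            push_cast
            rw [pow_succ Lip μ]
            have hP : (0 : ℝ) ≤ K₀ * h ^ 3 := by positivity
            generalize Lip ^ μ = X at hLpow ⊢
            have hXL : (1 : ℝ) ≤ X * Lip := by nlinarith only [hLpow, hLip1]
            nlinarith only [hP, hXL]
  have hfinal := main n le_rfl
  rw [hTdef]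
  have hpow : (0 : ℝ) < h ^ 3 := pow_pos hh0 3
  calc ‖φ ((n : ℝ) * h) - gdIter E h θ₀ n‖
      ≤ K₀ * h ^ 3 * ((n : ℝ) * Lip ^ n) := hfinal
    _ ≤ (K₀ * (n : ℝ) * Lip ^ n + 1) * h ^ 3 := by linarith only [hpow]
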